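/- arXiv:2501.00409 — 5 statements merged into one kernel-verified Lean document; each statement's English description precedes it below -/
import Mathlib

section
/- For any orthonormal basis {|w_0⟩, ..., |w_{d-1}⟩} of ℂ^d with det([w_0 | w_1 | ⋯ | w_{d-1}]) = 1, the supersinglet has the same antisymmetric expansion: |S_d⟩ = (1/√(d!)) Σ_{σ ∈ S_d} sgn(σ) |w_{σ(0)}⟩ ⊗ ⋯ ⊗ |w_{σ(d-1)}⟩. -/
open scoped BigOperators

noncomputable def supersinglet (d : ℕ) : EuclideanSpace ℂ (Fin d → Fin d) :=
  ((Real.sqrt (Nat.factorial d) : ℝ) : ℂ)⁻¹ •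
    ∑ σ : Equiv.Perm (Fin d),
      ((Equiv.Perm.sign σ : ℤ) : ℂ) • EuclideanSpace.single (⇑σ) (1 : ℂ)

/-- The elementary tensor `w₀ ⊗ w₁ ⊗ ⋯ ⊗ w_{d-1}` as a vector of `(ℂ^d)^{⊗d}`. -/
noncomputable def tensorVec (d : ℕ) (w : Fin d → EuclideanSpace ℂ (Fin d)) :
    EuclideanSpace ℂ (Fin d → Fin d) :=
  WithLp.toLp 2 (fun t => ∏ i, w i (t i))

/-! The coefficient of the basis tensor `|t(0), …, t(d-1)⟩` in
`∑ σ, sgn σ • w_{σ 0} ⊗ ⋯ ⊗ w_{σ (d-1)}` is the determinant of the rows `t` of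
`C = [w_0 | ⋯ | w_{d-1}]`. Selecting rows is left multiplication by the corresponding rows of
the identity, so this coefficient is `det C` times the one for the standard basis,
which gives the supersinglet. -/

open Matrix Equiv

lemma det_submatrix_id_eq_det_one_submatrix_mul {n R : Type*} [Fintype n] [DecidableEq n]
    [CommRing R] (C : Matrix n n R) (t : n → n) :
    (C.submatrix t id).det = ((1 : Matrix n n R).submatrix t id).det * C.det := by
  have h : C.submatrix t id = (1 : Matrix n n R).submatrix t id * C := by
    simpa using submatrix_mul (1 : Matrix n n R) C t id id Function.bijective_id
  rw [h, det_mul]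

lemma tensorVec_apply (d : ℕ) (w : Fin d → EuclideanSpace ℂ (Fin d)) (t : Fin d → Fin d) :
    tensorVec d w t = ∏ i, w i (t i) := rfl

lemma sum_sign_smul_tensorVec_apply (d : ℕ) (w : Fin d → EuclideanSpace ℂ (Fin d))
    (t : Fin d → Fin d) :
    (∑ σ : Perm (Fin d), ((Perm.sign σ : ℤ) : ℂ) • tensorVec d (fun i => w (σ i))) t =
      ((Matrix.of fun i j => w j i).submatrix t id).det := by
  rw [← det_transpose, det_apply']
  simp [WithLp.ofLp_sum, tensorVec_apply]

lemma tensorVec_single (d : ℕ) (f : Fin d → Fin d) :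
    tensorVec d (fun i => EuclideanSpace.single (f i) 1) = EuclideanSpace.single f 1 := by
  ext t
  simp [tensorVec_apply, Fintype.prod_boole, funext_iff]

lemma sum_sign_smul_tensorVec_eq_det_smul (d : ℕ) (w : Fin d → EuclideanSpace ℂ (Fin d)) :
    ∑ σ : Perm (Fin d), ((Perm.sign σ : ℤ) : ℂ) • tensorVec d (fun i => w (σ i)) =
      (Matrix.of fun i j => w j i).det •
        ∑ σ : Perm (Fin d),
          ((Perm.sign σ : ℤ) : ℂ) • EuclideanSpace.single ⇑σ (1 : ℂ) := by
  have hsingle := sum_sign_smul_tensorVec_apply d (fun j => EuclideanSpace.single j 1)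
  simp only [tensorVec_single] at hsingle
  have hstd :
      (Matrix.of fun i j => (EuclideanSpace.single j 1 : EuclideanSpace ℂ (Fin d)) i) = 1 := by
    ext i j
    simp [Matrix.one_apply]
  ext t
  rw [sum_sign_smul_tensorVec_apply, det_submatrix_id_eq_det_one_submatrix_mul, WithLp.ofLp_smul,
    Pi.smul_apply, hsingle, hstd, smul_eq_mul, mul_comm]

theorem supersinglet_basis_independent_general (d : ℕ)
    (w : Fin d → EuclideanSpace ℂ (Fin d))
    (hdet : Matrix.det (Matrix.of fun i j => w j i) = 1) :
    supersinglet d =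
      ((Real.sqrt (Nat.factorial d) : ℝ) : ℂ)⁻¹ •
        ∑ σ : Equiv.Perm (Fin d),
          ((Equiv.Perm.sign σ : ℤ) : ℂ) • tensorVec d (fun i => w (σ i)) := by
  rw [supersinglet, sum_sign_smul_tensorVec_eq_det_smul, hdet, one_smul]

/-- for any orthonormal basis `w` of `ℂ^d` whose matrix of columns has
determinant 1, the supersinglet has the same antisymmetric expansion in that basis. -/
theorem supersinglet_basis_independent (d : ℕ) (hd : 3 ≤ d)
    (w : Fin d → EuclideanSpace ℂ (Fin d)) (hw : Orthonormal ℂ w)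
    (hdet : Matrix.det (Matrix.of fun i j => w j i) = 1) :
    supersinglet d =
      ((Real.sqrt (Nat.factorial d) : ℝ) : ℂ)⁻¹ •
        ∑ σ : Equiv.Perm (Fin d),
          ((Equiv.Perm.sign σ : ℤ) : ℂ) • tensorVec d (fun i => w (σ i)) :=
  supersinglet_basis_independent_general d w hdet
end

section
/- There is no function v : {1,...,18} → {0,1} assigning values to the 18 vertices of the Cabello–Estebaranz–García-Alcaine orthogonality graph such that in each of the nine 4-element contexts exactly one vertex is assigned 1. -/
/-- The nine contexts (tetrads) of the 18-vector Cabello–Estebaranz–García-Alcaine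
Kochen–Specker set; vertices `1,…,9,A,…,I` are labeled `0,…,17`. -/
def ctx : Fin 9 → Finset (Fin 18) :=
  ![{0, 1, 2, 3}, {3, 4, 5, 6}, {6, 7, 8, 9}, {9, 10, 11, 12}, {12, 13, 14, 15},
    {15, 16, 17, 0}, {1, 4, 7, 10}, {13, 16, 2, 5}, {8, 11, 14, 17}]

/-- there is no `{0,1}`-assignment to the 18 vertices such that each of the
nine 4-element contexts contains exactly one vertex assigned `1`. -/
theorem no_KS_assignment_18 :
    ¬ ∃ v : Fin 18 → Bool,
        ∀ x : Fin 9, ((ctx x).filter (fun i => v i = true)).card = 1 := by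
  rintro ⟨v, h⟩
  have key : ∀ x : Fin 9, ((ctx x).filter (fun i => v i = true)).card
      = ∑ i ∈ ctx x, (v i).toNat := by
    intro x
    rw [Finset.card_filter]
    exact Finset.sum_congr rfl fun i _ => by cases v i <;> simp
  have h0 : ∑ i ∈ ({0,1,2,3} : Finset (Fin 18)), (v i).toNat = 1 := (key 0).symm.trans (h 0)
  have h1 : ∑ i ∈ ({3,4,5,6} : Finset (Fin 18)), (v i).toNat = 1 := (key 1).symm.trans (h 1)
  have h2 : ∑ i ∈ ({6,7,8,9} : Finset (Fin 18)), (v i).toNat = 1 := (key 2).symm.trans (h 2)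
  have h3 : ∑ i ∈ ({9,10,11,12} : Finset (Fin 18)), (v i).toNat = 1 := (key 3).symm.trans (h 3)
  have h4 : ∑ i ∈ ({12,13,14,15} : Finset (Fin 18)), (v i).toNat = 1 := (key 4).symm.trans (h 4)
  have h5 : ∑ i ∈ ({15,16,17,0} : Finset (Fin 18)), (v i).toNat = 1 := (key 5).symm.trans (h 5)
  have h6 : ∑ i ∈ ({1,4,7,10} : Finset (Fin 18)), (v i).toNat = 1 := (key 6).symm.trans (h 6)
  have h7 : ∑ i ∈ ({13,16,2,5} : Finset (Fin 18)), (v i).toNat = 1 := (key 7).symm.trans (h 7)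
  have h8 : ∑ i ∈ ({8,11,14,17} : Finset (Fin 18)), (v i).toNat = 1 := (key 8).symm.trans (h 8)
  simp (config := { decide := true }) only [Finset.sum_insert, Finset.mem_insert,
    Finset.mem_singleton, Finset.sum_singleton] at h0 h1 h2 h3 h4 h5 h6 h7 h8
  omega
end

section
/- For d = 4, complex coefficients α_{ijkl} indexed by permutations (i,j,k,l) of (0,1,2,3) satisfying the 23 linear equations arising from the perfect-strategy conditions for the two Peres bases {v₄,v₅,v₆,v₇} and {v₈,v₉,v₁₀,v₁₁} must be totally antisymmetric: α_{σ(0)σ(1)σ(2)σ(3)} = sgn(σ) α_{0123} for all permutations σ of {0,1,2,3}. -/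
/-- for `d = 4`, coefficients `α_{ijkl}` indexed by permutations of
`(0,1,2,3)` satisfying the 23 linear equations arising from the perfect-strategy
conditions for the Peres bases `{v₄,v₅,v₆,v₇}` and `{v₈,v₉,v₁₀,v₁₁}` are totally
antisymmetric. -/
theorem antisymmetry_from_relations_d4 (α : Fin 4 → Fin 4 → Fin 4 → Fin 4 → ℂ)
    (e1 : α 2 3 0 1 + α 2 3 1 0 + α 3 2 0 1 + α 3 2 1 0 = 0)
    (e2 : -α 2 3 0 1 + α 2 3 1 0 - α 3 2 0 1 + α 3 2 1 0 = 0)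
    (e3 : -α 2 3 0 1 - α 2 3 1 0 + α 3 2 0 1 + α 3 2 1 0 = 0)
    (e4 : α 2 0 3 1 + α 2 1 3 0 + α 3 0 2 1 + α 3 1 2 0 = 0)
    (e5 : -α 2 0 3 1 + α 2 1 3 0 - α 3 0 2 1 + α 3 1 2 0 = 0)
    (e6 : -α 2 0 3 1 - α 2 1 3 0 + α 3 0 2 1 + α 3 1 2 0 = 0)
    (e7 : α 2 0 1 3 + α 2 1 0 3 + α 3 0 1 2 + α 3 1 0 2 = 0)
    (e8 : -α 2 0 1 3 - α 2 1 0 3 + α 3 0 1 2 + α 3 1 0 2 = 0)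
    (e9 : -α 2 0 1 3 + α 2 1 0 3 - α 3 0 1 2 + α 3 1 0 2 = 0)
    (e10 : α 0 2 3 1 + α 0 3 2 1 + α 1 2 3 0 + α 1 3 2 0 = 0)
    (e11 : -α 0 2 3 1 - α 0 3 2 1 + α 1 2 3 0 + α 1 3 2 0 = 0)
    (e12 : -α 0 2 3 1 + α 0 3 2 1 - α 1 2 3 0 + α 1 3 2 0 = 0)
    (e13 : α 0 2 1 3 + α 0 3 1 2 + α 1 2 0 3 + α 1 3 0 2 = 0)
    (e14 : -α 0 2 1 3 + α 0 3 1 2 - α 1 2 0 3 + α 1 3 0 2 = 0)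
    (e15 : -α 0 2 1 3 - α 0 3 1 2 + α 1 2 0 3 + α 1 3 0 2 = 0)
    (e16 : α 0 1 2 3 + α 0 1 3 2 + α 1 0 2 3 + α 1 0 3 2 = 0)
    (e17 : -α 0 1 2 3 + α 0 1 3 2 - α 1 0 2 3 + α 1 0 3 2 = 0)
    (e18 : -α 0 1 2 3 - α 0 1 3 2 + α 1 0 2 3 + α 1 0 3 2 = 0)
    (e19 : α 1 3 0 2 + α 1 3 2 0 + α 3 1 0 2 + α 3 1 2 0 = 0)
    (e20 : -α 1 3 0 2 + α 1 3 2 0 - α 3 1 0 2 + α 3 1 2 0 = 0)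
    (e21 : -α 1 3 0 2 - α 1 3 2 0 + α 3 1 0 2 + α 3 1 2 0 = 0)
    (e22 : α 1 0 3 2 + α 1 2 3 0 + α 3 0 1 2 + α 3 2 1 0 = 0)
    (e23 : -α 1 0 3 2 + α 1 2 3 0 - α 3 0 1 2 + α 3 2 1 0 = 0) :
    ∀ σ : Equiv.Perm (Fin 4),
      α (σ 0) (σ 1) (σ 2) (σ 3) = ((Equiv.Perm.sign σ : ℤ) : ℂ) * α 0 1 2 3 := by
  have h0132 : α 0 1 3 2 = -α 0 1 2 3 := by linear_combination (1/2 : ℂ) * e16 + (-1/2 : ℂ) * e18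
  have h0213 : α 0 2 1 3 = -α 0 1 2 3 := by linear_combination (-1/2 : ℂ) * e7 + (-1/2 : ℂ) * e8 + (-1/2 : ℂ) * e14 + (-1/2 : ℂ) * e15 + (-1/2 : ℂ) * e17 + (-1/2 : ℂ) * e18 + (1/2 : ℂ) * e19 + (-1/2 : ℂ) * e20 + (1/2 : ℂ) * e22 + (-1/2 : ℂ) * e23
  have h0231 : α 0 2 3 1 = α 0 1 2 3 := by linear_combination (1/2 : ℂ) * e7 + (1/2 : ℂ) * e8 + (-1/2 : ℂ) * e11 + (-1/2 : ℂ) * e12 + (1/2 : ℂ) * e17 + (1/2 : ℂ) * e18 + (1/2 : ℂ) * e20 + (-1/2 : ℂ) * e21 + (-1/2 : ℂ) * e22 + (1/2 : ℂ) * e23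
  have h0312 : α 0 3 1 2 = α 0 1 2 3 := by linear_combination (1/2 : ℂ) * e7 + (1/2 : ℂ) * e8 + (1/2 : ℂ) * e13 + (1/2 : ℂ) * e14 + (1/2 : ℂ) * e17 + (1/2 : ℂ) * e18 + (-1/2 : ℂ) * e19 + (1/2 : ℂ) * e20 + (-1/2 : ℂ) * e22 + (1/2 : ℂ) * e23
  have h0321 : α 0 3 2 1 = -α 0 1 2 3 := by linear_combination (-1/2 : ℂ) * e7 + (-1/2 : ℂ) * e8 + (1/2 : ℂ) * e10 + (1/2 : ℂ) * e12 + (-1/2 : ℂ) * e17 + (-1/2 : ℂ) * e18 + (-1/2 : ℂ) * e20 + (1/2 : ℂ) * e21 + (1/2 : ℂ) * e22 + (-1/2 : ℂ) * e23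
  have h1023 : α 1 0 2 3 = -α 0 1 2 3 := by linear_combination (1/2 : ℂ) * e16 + (-1/2 : ℂ) * e17
  have h1032 : α 1 0 3 2 = α 0 1 2 3 := by linear_combination (1/2 : ℂ) * e17 + (1/2 : ℂ) * e18
  have h1203 : α 1 2 0 3 = α 0 1 2 3 := by linear_combination (1/2 : ℂ) * e7 + (1/2 : ℂ) * e8 + (1/2 : ℂ) * e13 + (1/2 : ℂ) * e15 + (1/2 : ℂ) * e17 + (1/2 : ℂ) * e18 + (-1/2 : ℂ) * e19 + (1/2 : ℂ) * e20 + (-1/2 : ℂ) * e22 + (1/2 : ℂ) * e23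
  have h1230 : α 1 2 3 0 = -α 0 1 2 3 := by linear_combination (-1/2 : ℂ) * e7 + (-1/2 : ℂ) * e8 + (1/2 : ℂ) * e10 + (1/2 : ℂ) * e11 + (-1/2 : ℂ) * e17 + (-1/2 : ℂ) * e18 + (-1/2 : ℂ) * e20 + (1/2 : ℂ) * e21 + (1/2 : ℂ) * e22 + (-1/2 : ℂ) * e23
  have h1302 : α 1 3 0 2 = -α 0 1 2 3 := by linear_combination (-1/2 : ℂ) * e7 + (-1/2 : ℂ) * e8 + (-1/2 : ℂ) * e17 + (-1/2 : ℂ) * e18 + (1/2 : ℂ) * e19 + (-1/2 : ℂ) * e20 + (1/2 : ℂ) * e22 + (-1/2 : ℂ) * e23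
  have h1320 : α 1 3 2 0 = α 0 1 2 3 := by linear_combination (1/2 : ℂ) * e7 + (1/2 : ℂ) * e8 + (1/2 : ℂ) * e17 + (1/2 : ℂ) * e18 + (1/2 : ℂ) * e20 + (-1/2 : ℂ) * e21 + (-1/2 : ℂ) * e22 + (1/2 : ℂ) * e23
  have h2013 : α 2 0 1 3 = α 0 1 2 3 := by linear_combination (1/2 : ℂ) * e7 + (-1/2 : ℂ) * e9 + (1/2 : ℂ) * e17 + (1/2 : ℂ) * e18 + (-1/2 : ℂ) * e22 + (1/2 : ℂ) * e23
  have h2031 : α 2 0 3 1 = -α 0 1 2 3 := by linear_combination (-1/2 : ℂ) * e5 + (-1/2 : ℂ) * e6 + (-1/2 : ℂ) * e7 + (-1/2 : ℂ) * e8 + (-1/2 : ℂ) * e17 + (-1/2 : ℂ) * e18 + (1/2 : ℂ) * e19 + (1/2 : ℂ) * e21 + (1/2 : ℂ) * e22 + (-1/2 : ℂ) * e23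
  have h2103 : α 2 1 0 3 = -α 0 1 2 3 := by linear_combination (-1/2 : ℂ) * e8 + (1/2 : ℂ) * e9 + (-1/2 : ℂ) * e17 + (-1/2 : ℂ) * e18 + (1/2 : ℂ) * e22 + (-1/2 : ℂ) * e23
  have h2130 : α 2 1 3 0 = α 0 1 2 3 := by linear_combination (1/2 : ℂ) * e4 + (1/2 : ℂ) * e5 + (1/2 : ℂ) * e7 + (1/2 : ℂ) * e8 + (1/2 : ℂ) * e17 + (1/2 : ℂ) * e18 + (-1/2 : ℂ) * e19 + (-1/2 : ℂ) * e21 + (-1/2 : ℂ) * e22 + (1/2 : ℂ) * e23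
  have h2301 : α 2 3 0 1 = α 0 1 2 3 := by linear_combination (-1/2 : ℂ) * e2 + (-1/2 : ℂ) * e3 + (1/2 : ℂ) * e7 + (1/2 : ℂ) * e8 + (-1/2 : ℂ) * e10 + (-1/2 : ℂ) * e11 + (1/2 : ℂ) * e17 + (1/2 : ℂ) * e18 + (1/2 : ℂ) * e20 + (-1/2 : ℂ) * e21 + (1/1 : ℂ) * e23
  have h2310 : α 2 3 1 0 = -α 0 1 2 3 := by linear_combination (1/2 : ℂ) * e1 + (1/2 : ℂ) * e2 + (-1/2 : ℂ) * e7 + (-1/2 : ℂ) * e8 + (1/2 : ℂ) * e10 + (1/2 : ℂ) * e11 + (-1/2 : ℂ) * e17 + (-1/2 : ℂ) * e18 + (-1/2 : ℂ) * e20 + (1/2 : ℂ) * e21 + (-1/1 : ℂ) * e23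
  have h3012 : α 3 0 1 2 = -α 0 1 2 3 := by linear_combination (-1/2 : ℂ) * e17 + (-1/2 : ℂ) * e18 + (1/2 : ℂ) * e22 + (-1/2 : ℂ) * e23
  have h3021 : α 3 0 2 1 = α 0 1 2 3 := by linear_combination (1/2 : ℂ) * e4 + (1/2 : ℂ) * e6 + (1/2 : ℂ) * e7 + (1/2 : ℂ) * e8 + (1/2 : ℂ) * e17 + (1/2 : ℂ) * e18 + (-1/2 : ℂ) * e19 + (-1/2 : ℂ) * e21 + (-1/2 : ℂ) * e22 + (1/2 : ℂ) * e23
  have h3102 : α 3 1 0 2 = α 0 1 2 3 := by linear_combination (1/2 : ℂ) * e7 + (1/2 : ℂ) * e8 + (1/2 : ℂ) * e17 + (1/2 : ℂ) * e18 + (-1/2 : ℂ) * e22 + (1/2 : ℂ) * e23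
  have h3120 : α 3 1 2 0 = -α 0 1 2 3 := by linear_combination (-1/2 : ℂ) * e7 + (-1/2 : ℂ) * e8 + (-1/2 : ℂ) * e17 + (-1/2 : ℂ) * e18 + (1/2 : ℂ) * e19 + (1/2 : ℂ) * e21 + (1/2 : ℂ) * e22 + (-1/2 : ℂ) * e23
  have h3201 : α 3 2 0 1 = -α 0 1 2 3 := by linear_combination (1/2 : ℂ) * e1 + (1/2 : ℂ) * e3 + (-1/2 : ℂ) * e7 + (-1/2 : ℂ) * e8 + (1/2 : ℂ) * e10 + (1/2 : ℂ) * e11 + (-1/2 : ℂ) * e17 + (-1/2 : ℂ) * e18 + (-1/2 : ℂ) * e20 + (1/2 : ℂ) * e21 + (-1/1 : ℂ) * e23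
  have h3210 : α 3 2 1 0 = α 0 1 2 3 := by linear_combination (1/2 : ℂ) * e7 + (1/2 : ℂ) * e8 + (-1/2 : ℂ) * e10 + (-1/2 : ℂ) * e11 + (1/2 : ℂ) * e17 + (1/2 : ℂ) * e18 + (1/2 : ℂ) * e20 + (-1/2 : ℂ) * e21 + (1/1 : ℂ) * e23
  clear e1 e2 e3 e4 e5 e6 e7 e8 e9 e10 e11 e12 e13 e14 e15 e16 e17 e18 e19 e20 e21 e22 e23
  intro σ
  set_option synthInstance.maxSize 2000 in
  set_option maxRecDepth 10000 in
  have key : ∀ τ : Equiv.Perm (Fin 4), (τ 0 = 0 ∧ τ 1 = 1 ∧ τ 2 = 2 ∧ τ 3 = 3 ∧ (Equiv.Perm.sign τ : ℤ) = 1) ∨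
      (τ 0 = 0 ∧ τ 1 = 1 ∧ τ 2 = 3 ∧ τ 3 = 2 ∧ (Equiv.Perm.sign τ : ℤ) = -1) ∨
      (τ 0 = 0 ∧ τ 1 = 2 ∧ τ 2 = 1 ∧ τ 3 = 3 ∧ (Equiv.Perm.sign τ : ℤ) = -1) ∨
      (τ 0 = 0 ∧ τ 1 = 2 ∧ τ 2 = 3 ∧ τ 3 = 1 ∧ (Equiv.Perm.sign τ : ℤ) = 1) ∨
      (τ 0 = 0 ∧ τ 1 = 3 ∧ τ 2 = 1 ∧ τ 3 = 2 ∧ (Equiv.Perm.sign τ : ℤ) = 1) ∨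
      (τ 0 = 0 ∧ τ 1 = 3 ∧ τ 2 = 2 ∧ τ 3 = 1 ∧ (Equiv.Perm.sign τ : ℤ) = -1) ∨
      (τ 0 = 1 ∧ τ 1 = 0 ∧ τ 2 = 2 ∧ τ 3 = 3 ∧ (Equiv.Perm.sign τ : ℤ) = -1) ∨
      (τ 0 = 1 ∧ τ 1 = 0 ∧ τ 2 = 3 ∧ τ 3 = 2 ∧ (Equiv.Perm.sign τ : ℤ) = 1) ∨
      (τ 0 = 1 ∧ τ 1 = 2 ∧ τ 2 = 0 ∧ τ 3 = 3 ∧ (Equiv.Perm.sign τ : ℤ) = 1) ∨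
      (τ 0 = 1 ∧ τ 1 = 2 ∧ τ 2 = 3 ∧ τ 3 = 0 ∧ (Equiv.Perm.sign τ : ℤ) = -1) ∨
      (τ 0 = 1 ∧ τ 1 = 3 ∧ τ 2 = 0 ∧ τ 3 = 2 ∧ (Equiv.Perm.sign τ : ℤ) = -1) ∨
      (τ 0 = 1 ∧ τ 1 = 3 ∧ τ 2 = 2 ∧ τ 3 = 0 ∧ (Equiv.Perm.sign τ : ℤ) = 1) ∨
      (τ 0 = 2 ∧ τ 1 = 0 ∧ τ 2 = 1 ∧ τ 3 = 3 ∧ (Equiv.Perm.sign τ : ℤ) = 1) ∨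
      (τ 0 = 2 ∧ τ 1 = 0 ∧ τ 2 = 3 ∧ τ 3 = 1 ∧ (Equiv.Perm.sign τ : ℤ) = -1) ∨
      (τ 0 = 2 ∧ τ 1 = 1 ∧ τ 2 = 0 ∧ τ 3 = 3 ∧ (Equiv.Perm.sign τ : ℤ) = -1) ∨
      (τ 0 = 2 ∧ τ 1 = 1 ∧ τ 2 = 3 ∧ τ 3 = 0 ∧ (Equiv.Perm.sign τ : ℤ) = 1) ∨
      (τ 0 = 2 ∧ τ 1 = 3 ∧ τ 2 = 0 ∧ τ 3 = 1 ∧ (Equiv.Perm.sign τ : ℤ) = 1) ∨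
      (τ 0 = 2 ∧ τ 1 = 3 ∧ τ 2 = 1 ∧ τ 3 = 0 ∧ (Equiv.Perm.sign τ : ℤ) = -1) ∨
      (τ 0 = 3 ∧ τ 1 = 0 ∧ τ 2 = 1 ∧ τ 3 = 2 ∧ (Equiv.Perm.sign τ : ℤ) = -1) ∨
      (τ 0 = 3 ∧ τ 1 = 0 ∧ τ 2 = 2 ∧ τ 3 = 1 ∧ (Equiv.Perm.sign τ : ℤ) = 1) ∨
      (τ 0 = 3 ∧ τ 1 = 1 ∧ τ 2 = 0 ∧ τ 3 = 2 ∧ (Equiv.Perm.sign τ : ℤ) = 1) ∨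
      (τ 0 = 3 ∧ τ 1 = 1 ∧ τ 2 = 2 ∧ τ 3 = 0 ∧ (Equiv.Perm.sign τ : ℤ) = -1) ∨
      (τ 0 = 3 ∧ τ 1 = 2 ∧ τ 2 = 0 ∧ τ 3 = 1 ∧ (Equiv.Perm.sign τ : ℤ) = -1) ∨
      (τ 0 = 3 ∧ τ 1 = 2 ∧ τ 2 = 1 ∧ τ 3 = 0 ∧ (Equiv.Perm.sign τ : ℤ) = 1) := by decide
  rcases key σ with h | h | h | h | h | h | h | h | h | h | h | h | h | h | h | h | h | h | h | h | h | h | h | h <;> obtain ⟨h0, h1, h2, h3, hs⟩ := h <;> rw [h0, h1, h2, h3, hs] <;> simp_all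
end

section
/- In the 4-party game based on the 18-vector KS set, the maximum winning probability over all local deterministic strategies is strictly less than 1; specifically there is no deterministic strategy winning on all 36 input pairs (9 contexts × 4 vector choices), because such a strategy would induce a {0,1}-assignment to the 18 vectors with exactly one 1 per context. -/
lemma two_ctx : ∀ y : Fin 18, (Finset.univ.filter (fun x : Fin 9 => y ∈ ctx x)).card = 2 := by
  decide

/-- there is no local deterministic strategy for the 4-party game based on
the 18-vector KS set that wins on all 36 inputs: there are no output functions
`aA, aB, aC` (assigning to each context one of its elements, pairwise distinct) and no
value assignment `v` for David such that for every context `x` and every `y ∈ x`, David's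
output `v y` is `1` exactly when `y` is the element of `x` not output by the first three
parties. -/
theorem no_perfect_classical_strategy :
    ¬ ∃ (aA aB aC : Fin 9 → Fin 18) (v : Fin 18 → Bool),
        ∀ x : Fin 9,
          (aA x ∈ ctx x ∧ aB x ∈ ctx x ∧ aC x ∈ ctx x ∧
            aA x ≠ aB x ∧ aA x ≠ aC x ∧ aB x ≠ aC x) ∧
          ∀ y ∈ ctx x, (v y = true ↔ (y ≠ aA x ∧ y ≠ aB x ∧ y ≠ aC x)) := by
  rintro ⟨aA, aB, aC, v, h⟩
  -- each context contains exactly one vertex with v = true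
  have key : ∀ x : Fin 9, ((ctx x).filter (fun y => v y = true)).card = 1 := by
    intro x
    obtain ⟨⟨hA, hB, hC, hAB, hAC, hBC⟩, hv⟩ := h x
    have hfilter : (ctx x).filter (fun y => v y = true)
        = (ctx x) \ {aA x, aB x, aC x} := by
      ext y
      simp only [Finset.mem_filter, Finset.mem_sdiff, Finset.mem_insert, Finset.mem_singleton]
      constructor
      · rintro ⟨hy, hvy⟩
        obtain ⟨h1, h2, h3⟩ := (hv y hy).1 hvy
        exact ⟨hy, by tauto⟩
      · rintro ⟨hy, hne⟩
        push_neg at hne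
        exact ⟨hy, (hv y hy).2 ⟨hne.1, hne.2.1, hne.2.2⟩⟩
    have hsub : ({aA x, aB x, aC x} : Finset (Fin 18)) ⊆ ctx x := by
      intro y hy
      simp only [Finset.mem_insert, Finset.mem_singleton] at hy
      rcases hy with h' | h' | h' <;> subst h' <;> assumption
    have hcard : (ctx x).card = 4 := by fin_cases x <;> decide
    have h3 : ({aA x, aB x, aC x} : Finset (Fin 18)).card = 3 := by
      rw [Finset.card_insert_of_notMem (by simp [hAB, hAC]),
        Finset.card_insert_of_notMem (by simp [hBC]), Finset.card_singleton]
    rw [hfilter, Finset.card_sdiff_of_subset hsub, hcard, h3]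
  -- total count is 9
  have S9 : ∑ x : Fin 9, ((ctx x).filter (fun y => v y = true)).card = 9 := by
    simp [key]
  -- but the total count is even
  have Seven : ∑ x : Fin 9, ((ctx x).filter (fun y => v y = true)).card
      = 2 * (Finset.univ.filter (fun y : Fin 18 => v y = true)).card := by
    have step1 : ∀ x : Fin 9, ((ctx x).filter (fun y => v y = true)).card
        = ∑ y : Fin 18, if y ∈ ctx x ∧ v y = true then 1 else 0 := by
      intro x
      have : (ctx x).filter (fun y => v y = true)
          = Finset.univ.filter (fun y => y ∈ ctx x ∧ v y = true) := by
        ext y; simp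
      rw [this, Finset.card_filter]
    calc ∑ x : Fin 9, ((ctx x).filter (fun y => v y = true)).card
        = ∑ x : Fin 9, ∑ y : Fin 18, if y ∈ ctx x ∧ v y = true then 1 else 0 :=
          Finset.sum_congr rfl fun x _ => step1 x
      _ = ∑ y : Fin 18, ∑ x : Fin 9, if y ∈ ctx x ∧ v y = true then 1 else 0 :=
          Finset.sum_comm
      _ = ∑ y : Fin 18, if v y = true then 2 else 0 := by
          refine Finset.sum_congr rfl fun y _ => ?_
          by_cases hv : v y = true
          · simp only [hv, and_true]
            rw [← Finset.card_filter, two_ctx y]; simp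
          · simp [hv]
      _ = 2 * (Finset.univ.filter (fun y : Fin 18 => v y = true)).card := by
          rw [Finset.sum_ite, Finset.sum_const, Finset.sum_const]
          simp [mul_comm]
  omega
end

section
/- The reduced density matrix of the supersinglet |S_d⟩ on any single party is the maximally mixed state 𝟙/d on ℂ^d. -/
open scoped BigOperators

/-- The reduced density matrix of a state `ψ ∈ (ℂ^d)^{⊗d}` on the `i`-th party, obtained
by tracing out the other `d − 1` tensor factors:
`ρ_i(a,b) = Σ_{t : t i = a} ψ(t) · conj(ψ(t with i-th entry replaced by b))`. -/
noncomputable def reducedDensity (d : ℕ) (ψ : EuclideanSpace ℂ (Fin d → Fin d))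
    (i : Fin d) : Matrix (Fin d) (Fin d) ℂ :=
  Matrix.of fun a b => ∑ t : Fin d → Fin d,
    if t i = a then ψ t * (starRingEnd ℂ) (ψ (Function.update t i b)) else 0

lemma ss_apply (d : ℕ) (t : Fin d → Fin d) :
    supersinglet d t =
    ((Real.sqrt (Nat.factorial d) : ℝ) : ℂ)⁻¹ *
    ∑ σ : Equiv.Perm (Fin d), ((Equiv.Perm.sign σ : ℤ) : ℂ) * (if t = ⇑σ then 1 else 0) := by
  have h1 : supersinglet d t =
      ((Real.sqrt (Nat.factorial d) : ℝ) : ℂ)⁻¹ *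
      (∑ σ : Equiv.Perm (Fin d),
      ((Equiv.Perm.sign σ : ℤ) : ℂ) • EuclideanSpace.single (⇑σ) (1 : ℂ)) t := rfl
  rw [h1, WithLp.ofLp_sum, Fintype.sum_apply]
  congr 1
  refine Finset.sum_congr rfl fun σ _ => ?_
  have : (((Equiv.Perm.sign σ : ℤ) : ℂ) • EuclideanSpace.single (⇑σ) (1 : ℂ)) t
      = ((Equiv.Perm.sign σ : ℤ) : ℂ) * (EuclideanSpace.single (⇑σ) (1 : ℂ)) t := rfl
  rw [this]
  simp [EuclideanSpace.single_apply]

lemma ss_apply_perm (d : ℕ) (σ : Equiv.Perm (Fin d)) :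
    supersinglet d ⇑σ =
    ((Real.sqrt (Nat.factorial d) : ℝ) : ℂ)⁻¹ * ((Equiv.Perm.sign σ : ℤ) : ℂ) := by
  rw [ss_apply]
  congr 1
  rw [Finset.sum_eq_single σ]
  · simp
  · intro τ _ hτ
    have : ⇑σ ≠ ⇑τ := fun h => hτ (Equiv.coe_fn_injective h).symm
    simp [this]
  · simp

lemma ss_apply_noninj (d : ℕ) (t : Fin d → Fin d) (ht : ¬ Function.Injective t) :
    supersinglet d t = 0 := by
  rw [ss_apply]
  have : ∀ σ : Equiv.Perm (Fin d), t ≠ ⇑σ := by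
    intro σ h; exact ht (h ▸ σ.injective)
  simp [this]

lemma sum_perm_of_vanish {d : ℕ} {M : Type*} [AddCommMonoid M] (F : (Fin d → Fin d) → M)
    (h : ∀ t, ¬ Function.Injective t → F t = 0) :
    ∑ t : Fin d → Fin d, F t = ∑ σ : Equiv.Perm (Fin d), F ⇑σ := by
  have himg : ∑ σ : Equiv.Perm (Fin d), F ⇑σ
      = ∑ t ∈ Finset.univ.image (fun σ : Equiv.Perm (Fin d) => ⇑σ), F t :=
    (Finset.sum_image (fun σ _ τ _ hh => Equiv.coe_fn_injective hh)).symm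
  rw [himg]
  symm
  apply Finset.sum_subset (Finset.subset_univ _)
  intro t _ ht
  apply h
  intro hinj
  have hbij : Function.Bijective t := (Finite.injective_iff_bijective).mp hinj
  exact ht (Finset.mem_image.mpr ⟨Equiv.ofBijective t hbij, Finset.mem_univ _, rfl⟩)

lemma card_fiber_mul (d : ℕ) (i a : Fin d) :
    (Finset.univ.filter fun σ : Equiv.Perm (Fin d) => σ i = a).card * d = d.factorial := by
  have hcard : ∀ b : Fin d,
      (Finset.univ.filter fun σ : Equiv.Perm (Fin d) => σ i = b).card
      = (Finset.univ.filter fun σ : Equiv.Perm (Fin d) => σ i = a).card := by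
    intro b
    apply Finset.card_bij (fun σ _ => Equiv.swap b a * σ)
    · intro σ hσ
      simp only [Finset.mem_filter, Finset.mem_univ, true_and] at hσ ⊢
      simp [hσ]
    · intro σ hσ τ hτ h
      exact mul_left_cancel h
    · intro σ hσ
      simp only [Finset.mem_filter, Finset.mem_univ, true_and] at hσ
      refine ⟨Equiv.swap b a * σ, ?_, ?_⟩
      · simp [hσ, Equiv.swap_apply_right]
      · rw [← mul_assoc, Equiv.swap_mul_self, one_mul]
  have hfact : d.factorial = Fintype.card (Equiv.Perm (Fin d)) := by
    simp [Fintype.card_perm]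
  have htotal : ∑ b : Fin d,
      (Finset.univ.filter fun σ : Equiv.Perm (Fin d) => σ i = b).card
      = d.factorial := by
    rw [hfact, ← Finset.card_univ]
    exact (Finset.card_eq_sum_card_fiberwise (fun σ _ => Finset.mem_univ (σ i))).symm
  calc (Finset.univ.filter fun σ : Equiv.Perm (Fin d) => σ i = a).card * d
      = ∑ _b : Fin d, (Finset.univ.filter fun σ : Equiv.Perm (Fin d) => σ i = a).card := by
        simp [Finset.sum_const, mul_comm]
    _ = ∑ b : Fin d, (Finset.univ.filter fun σ : Equiv.Perm (Fin d) => σ i = b).card :=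
        Finset.sum_congr rfl fun b _ => (hcard b).symm
    _ = d.factorial := htotal

/-- the single-party reduced density matrix of the supersinglet is the
maximally mixed state `𝟙/d`. -/
theorem supersinglet_reduced_maximally_mixed (d : ℕ) (hd : 3 ≤ d) (i : Fin d) :
    reducedDensity d (supersinglet d) i = ((d : ℂ))⁻¹ • (1 : Matrix (Fin d) (Fin d) ℂ) := by
  have hd0 : (d : ℂ) ≠ 0 := by
    exact_mod_cast Nat.cast_ne_zero.mpr (by omega)
  ext a b
  rw [reducedDensity, Matrix.of_apply]
  rw [sum_perm_of_vanish _ (fun t ht => by rw [ss_apply_noninj d t ht]; simp)]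
  by_cases hab : a = b
  · subst hab
    have hterm : ∀ σ : Equiv.Perm (Fin d), (σ : Fin d → Fin d) i = a →
        supersinglet d ⇑σ *
          (starRingEnd ℂ) (supersinglet d (Function.update (⇑σ) i a))
        = ((d.factorial : ℂ))⁻¹ := by
      intro σ hσ
      have hup : Function.update (⇑σ) i a = ⇑σ := by
        rw [← hσ]; exact Function.update_eq_self i _
      rw [hup, ss_apply_perm]
      have hs : (starRingEnd ℂ) ((Equiv.Perm.sign σ : ℤ) : ℂ) = ((Equiv.Perm.sign σ : ℤ) : ℂ) := by
        rw [map_intCast]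
      have hc : (starRingEnd ℂ) (((Real.sqrt (Nat.factorial d) : ℝ) : ℂ)⁻¹)
          = ((Real.sqrt (Nat.factorial d) : ℝ) : ℂ)⁻¹ := by
        rw [map_inv₀, Complex.conj_ofReal]
      rw [map_mul, hs, hc]
      have hsgn : ((Equiv.Perm.sign σ : ℤ) : ℂ) * ((Equiv.Perm.sign σ : ℤ) : ℂ) = 1 := by
        rcases Int.units_eq_one_or (Equiv.Perm.sign σ) with h | h <;> rw [h] <;> norm_num
      have hcc : ((Real.sqrt (Nat.factorial d) : ℝ) : ℂ)⁻¹ *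
          ((Real.sqrt (Nat.factorial d) : ℝ) : ℂ)⁻¹ = ((d.factorial : ℂ))⁻¹ := by
        rw [← mul_inv]
        congr 1
        rw [← Complex.ofReal_mul, Real.mul_self_sqrt (by positivity)]
        push_cast; ring
      calc ((Real.sqrt (Nat.factorial d) : ℝ) : ℂ)⁻¹ * ((Equiv.Perm.sign σ : ℤ) : ℂ) *
            (((Real.sqrt (Nat.factorial d) : ℝ) : ℂ)⁻¹ * ((Equiv.Perm.sign σ : ℤ) : ℂ))
          = (((Real.sqrt (Nat.factorial d) : ℝ) : ℂ)⁻¹ *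
              ((Real.sqrt (Nat.factorial d) : ℝ) : ℂ)⁻¹) *
            (((Equiv.Perm.sign σ : ℤ) : ℂ) * ((Equiv.Perm.sign σ : ℤ) : ℂ)) := by ring
        _ = ((d.factorial : ℂ))⁻¹ := by rw [hsgn, hcc, mul_one]
    have : ∑ σ : Equiv.Perm (Fin d),
        (if (σ : Fin d → Fin d) i = a then
          supersinglet d ⇑σ *
            (starRingEnd ℂ) (supersinglet d (Function.update (⇑σ) i a)) else 0)
        = ∑ σ : Equiv.Perm (Fin d),
        (if (σ : Fin d → Fin d) i = a then ((d.factorial : ℂ))⁻¹ else 0) := by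
      refine Finset.sum_congr rfl fun σ _ => ?_
      by_cases hσ : (σ : Fin d → Fin d) i = a
      · rw [if_pos hσ, if_pos hσ, hterm σ hσ]
      · rw [if_neg hσ, if_neg hσ]
    rw [this, ← Finset.sum_filter, Finset.sum_const, nsmul_eq_mul]
    have hN := card_fiber_mul d i a
    have hNC : ((Finset.univ.filter fun σ : Equiv.Perm (Fin d) => σ i = a).card : ℂ) * d
        = (d.factorial : ℂ) := by exact_mod_cast hN
    have hfac0 : (d.factorial : ℂ) ≠ 0 := by
      exact_mod_cast Nat.cast_ne_zero.mpr (Nat.factorial_ne_zero d)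
    rw [Matrix.smul_apply, Matrix.one_apply_eq, smul_eq_mul, mul_one]
    field_simp
    linear_combination hNC
  · have hterm : ∀ σ : Equiv.Perm (Fin d),
        (if (σ : Fin d → Fin d) i = a then
          supersinglet d ⇑σ *
            (starRingEnd ℂ) (supersinglet d (Function.update (⇑σ) i b)) else 0) = 0 := by
      intro σ
      by_cases hσ : (σ : Fin d → Fin d) i = a
      · rw [if_pos hσ]
        have hninj : ¬ Function.Injective (Function.update (⇑σ) i b) := by
          intro hinj
          have h1 : Function.update (⇑σ) i b i = b := by simp
          have hne : σ.symm b ≠ i := by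
            intro h
            apply hab
            rw [← hσ, ← h]
            simp
          have h2 : Function.update (⇑σ) i b (σ.symm b) = b := by
            rw [Function.update_of_ne hne]
            simp
          exact hne (hinj (h2.trans h1.symm))
        rw [ss_apply_noninj d _ hninj]
        simp
      · rw [if_neg hσ]
    rw [Finset.sum_congr rfl fun σ _ => hterm σ, Finset.sum_const_zero,
      Matrix.smul_apply, Matrix.one_apply_ne hab, smul_zero]
end
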